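/- Let k ≥ 3 and r ≥ 2 be integers, and let B₁ ∪ ⋯ ∪ B_r be a partition of the edge set of the complete graph K_k into r nonempty parts, with b_i = |B_i| and κ = k(k−1)/2. Then b₁* + ⋯ + b_r* ≥ (κ − (r−1))* + 2(r−1) ≥ k + r, where b* denotes the minimal number of vertices of a graph with b edges. -/

import Mathlib

/-- `bstar b` is the least `v` with `b ≤ v*(v-1)/2`, the minimal number of vertices
of a simple graph with `b` edges. -/
noncomputable def bstar (b : ℕ) : ℕ := sInf {v : ℕ | b ≤ v * (v - 1) / 2}

lemma bstar_set_nonempty (b : ℕ) : {v : ℕ | b ≤ v * (v - 1) / 2}.Nonempty := by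
  refine ⟨b + 1, ?_⟩
  simp only [Set.mem_setOf_eq, Nat.add_sub_cancel]
  rw [Nat.le_div_iff_mul_le (by norm_num)]
  rcases b with _ | b
  · simp
  · nlinarith

lemma bstar_spec (b : ℕ) : b ≤ bstar b * (bstar b - 1) / 2 :=
  Nat.sInf_mem (bstar_set_nonempty b)

lemma bstar_le {b u : ℕ} (h : b ≤ u * (u - 1) / 2) : bstar b ≤ u :=
  Nat.sInf_le h

lemma le_bstar {b v : ℕ} (h : v * (v - 1) / 2 < b) : v + 1 ≤ bstar b := by
  refine le_csInf (bstar_set_nonempty b) ?_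
  intro w hw
  by_contra hc
  push_neg at hc
  have hw' : w ≤ v := by omega
  have : w * (w - 1) / 2 ≤ v * (v - 1) / 2 :=
    Nat.div_le_div_right (Nat.mul_le_mul hw' (by omega))
  exact absurd hw (by simp only [Set.mem_setOf_eq]; omega)

lemma two_le_bstar {b : ℕ} (hb : 1 ≤ b) : 2 ≤ bstar b := by
  have := le_bstar (b := b) (v := 1) (by omega)
  omega

lemma bstar_two_le {a b : ℕ} (ha : 1 ≤ a) (hb : 1 ≤ b) :
    bstar (a + b - 1) + 2 ≤ bstar a + bstar b := by
  have hu2 : 2 ≤ bstar a := two_le_bstar ha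
  have hv2 : 2 ≤ bstar b := two_le_bstar hb
  have ha' : 2 * a ≤ bstar a * (bstar a - 1) := by
    have h1 := bstar_spec a
    have h2 : 2 * (bstar a * (bstar a - 1) / 2) ≤ bstar a * (bstar a - 1) :=
      Nat.mul_div_le _ 2
    omega
  have hb' : 2 * b ≤ bstar b * (bstar b - 1) := by
    have h1 := bstar_spec b
    have h2 : 2 * (bstar b * (bstar b - 1) / 2) ≤ bstar b * (bstar b - 1) :=
      Nat.mul_div_le _ 2
    omega
  obtain ⟨u', hu⟩ : ∃ u', bstar a = u' + 2 := ⟨bstar a - 2, by omega⟩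
  obtain ⟨v', hv⟩ : ∃ v', bstar b = v' + 2 := ⟨bstar b - 2, by omega⟩
  obtain ⟨a', rfl⟩ : ∃ a', a = a' + 1 := ⟨a - 1, by omega⟩
  rw [hu] at ha'
  rw [hv] at hb'
  have e1 : u' + 2 - 1 = u' + 1 := by omega
  have e2 : v' + 2 - 1 = v' + 1 := by omega
  rw [e1] at ha'
  rw [e2] at hb'
  have key : bstar (a' + 1 + b - 1) ≤ u' + v' + 2 := by
    apply bstar_le
    rw [Nat.le_div_iff_mul_le (by norm_num)]
    have h3 : a' + 1 + b - 1 = a' + b := by omega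
    have h4 : u' + v' + 2 - 1 = u' + v' + 1 := by omega
    rw [h3, h4]
    nlinarith
  omega

lemma sum_key {ι : Type*} (s : Finset ι) (b : ι → ℕ) (hs : s.Nonempty)
    (hb : ∀ i ∈ s, 1 ≤ b i) :
    bstar ((∑ i ∈ s, b i) - (s.card - 1)) + 2 * (s.card - 1) ≤ ∑ i ∈ s, bstar (b i) := by
  induction hs using Finset.Nonempty.cons_induction with
  | singleton a => simp
  | cons a s ha hs ih =>
    simp only [Finset.sum_cons, Finset.card_cons]
    have hba : 1 ≤ b a := hb a (Finset.mem_cons_self a s)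
    have hb' : ∀ i ∈ s, 1 ≤ b i := fun i hi => hb i (Finset.mem_cons_of_mem hi)
    have ih' := ih hb'
    have hcard : s.card ≤ ∑ i ∈ s, b i := by
      calc s.card = ∑ _i ∈ s, 1 := by simp
        _ ≤ ∑ i ∈ s, b i := Finset.sum_le_sum hb'
    have hc1 : 1 ≤ s.card := hs.card_pos
    have hS1 : 1 ≤ (∑ i ∈ s, b i) - (s.card - 1) := by omega
    have key := bstar_two_le hba hS1
    have harg : b a + ((∑ i ∈ s, b i) - (s.card - 1)) - 1
        = b a + (∑ i ∈ s, b i) - (s.card + 1 - 1) := by omega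
    rw [harg] at key
    omega

theorem stmt1 (k r : ℕ) (hk : 3 ≤ k) (hr : 2 ≤ r)
    (B : Fin r → Finset (Sym2 (Fin k)))
    (hne : ∀ i, (B i).Nonempty)
    (hdisj : ∀ i j, i ≠ j → Disjoint (B i) (B j))
    (hcover : Finset.univ.biUnion B = (⊤ : SimpleGraph (Fin k)).edgeFinset) :
    ∑ i, bstar (B i).card ≥ bstar (k * (k - 1) / 2 - (r - 1)) + 2 * (r - 1)
      ∧ bstar (k * (k - 1) / 2 - (r - 1)) + 2 * (r - 1) ≥ k + r := by
  classical
  -- total number of edges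
  have hκ : ∑ i, (B i).card = k * (k - 1) / 2 := by
    have h1 : (Finset.univ.biUnion B).card = ∑ i, (B i).card :=
      Finset.card_biUnion (fun i _ j _ hij => hdisj i j hij)
    rw [hcover] at h1
    rw [← h1, SimpleGraph.card_edgeFinset_top_eq_card_choose_two]
    simp [Nat.choose_two_right, Fintype.card_fin]
  have hb1 : ∀ i ∈ (Finset.univ : Finset (Fin r)), 1 ≤ (B i).card :=
    fun i _ => (hne i).card_pos
  have hrκ : r ≤ k * (k - 1) / 2 := by
    calc r = ∑ _i : Fin r, 1 := by simp
      _ ≤ ∑ i, (B i).card := Finset.sum_le_sum hb1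
      _ = _ := hκ
  constructor
  · have hinst : Nonempty (Fin r) := ⟨⟨0, by omega⟩⟩
    have h := sum_key Finset.univ (fun i => (B i).card)
      Finset.univ_nonempty hb1
    simpa [hκ, Finset.card_univ, Fintype.card_fin] using h
  · -- second inequality
    set m := k * (k - 1) / 2 - (r - 1) with hm
    have hm1 : 1 ≤ m := by omega
    by_cases hrk : k ≤ r
    · have := two_le_bstar hm1
      omega
    · push_neg at hrk
      set d := k - r with hd
      have hd1 : 1 ≤ d := by omega
      -- need (d+1)*d/2 < m, then bstar m ≥ d + 2 = k - r + 2
      have heven1 : ∃ x, (d + 1) * d = 2 * x := by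
        have := Nat.even_mul_succ_self d
        obtain ⟨x, hx⟩ := this
        exact ⟨x, by rw [mul_comm]; omega⟩
      have heven2 : ∃ y, k * (k - 1) = 2 * y := by
        obtain ⟨k', rfl⟩ : ∃ k', k = k' + 1 := ⟨k - 1, by omega⟩
        have := Nat.even_mul_succ_self k'
        obtain ⟨y, hy⟩ := this
        exact ⟨y, by simp only [Nat.add_sub_cancel]; rw [mul_comm]; omega⟩
      obtain ⟨x, hx⟩ := heven1
      obtain ⟨y, hy⟩ := heven2
      have hstrict : (d + 1) * d + 2 * (r - 1) < k * (k - 1) := by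
        obtain ⟨t, ht⟩ : ∃ t, r = t + 2 := ⟨r - 2, by omega⟩
        have hkd : k = d + t + 2 := by omega
        have hkd1 : k - 1 = d + t + 1 := by omega
        rw [ht, hkd1, hkd]
        have h2 : t + 2 - 1 = t + 1 := by omega
        rw [h2]
        nlinarith [hd1]
      have hlt : (d + 1) * d / 2 < m := by
        have hxd : (d + 1) * d / 2 = x := by omega
        have hyd : k * (k - 1) / 2 = y := by omega
        omega
      have hge := le_bstar (b := m) (v := d + 1) (by
        have e : d + 1 - 1 = d := by omega
        rw [e]
        exact hlt)
      omega
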